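/- arXiv:2010.16077 — 4 statements merged into one kernel-verified Lean document; each statement's English description precedes it below -/
import Mathlib

section
/- If z₁ and z₂ are complex numbers with |z₁| ≤ 1 and |z₂| ≤ 1, then the pair (s, p) = (z₁ + z₂, z₁z₂) satisfies |s| ≤ 2 and |s − conj(s)·p| ≤ 1 − |p|². -/
/-!
Writing `s = z₁ + z₂` and `p = z₁ z₂`, one has
`s - conj s · p = z₁ (1 - |z₂|²) + z₂ (1 - |z₁|²)`, so with `a = |z₁|`, `b = |z₂|` the second
condition reduces to `a (1 - b²) + b (1 - a²) ≤ 1 - a²b²`, whose defect is `(1 - a)(1 - b)(1 - ab)`.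
-/

open ComplexConjugate

theorem mul_one_sub_sq_add_mul_one_sub_sq_le {a b : ℝ} (ha₀ : 0 ≤ a) (ha : a ≤ 1) (hb : b ≤ 1) :
    a * (1 - b ^ 2) + b * (1 - a ^ 2) ≤ 1 - (a * b) ^ 2 := by
  have hab : a * b ≤ 1 := by nlinarith
  have hdefect : 0 ≤ (1 - a) * (1 - b) * (1 - a * b) :=
    mul_nonneg (mul_nonneg (by linarith) (by linarith)) (by linarith)
  linarith [show 1 - (a * b) ^ 2 - (a * (1 - b ^ 2) + b * (1 - a ^ 2))
    = (1 - a) * (1 - b) * (1 - a * b) by ring]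

section RCLike

variable {𝕜 : Type*} [RCLike 𝕜]

theorem RCLike.add_sub_conj_add_mul_mul_eq (z₁ z₂ : 𝕜) :
    (z₁ + z₂) - conj (z₁ + z₂) * (z₁ * z₂) =
      z₁ * ((1 - ‖z₂‖ ^ 2 : ℝ) : 𝕜) + z₂ * ((1 - ‖z₁‖ ^ 2 : ℝ) : 𝕜) := by
  push_cast
  rw [← RCLike.mul_conj z₁, ← RCLike.mul_conj z₂, map_add]
  ring

theorem RCLike.norm_add_sub_conj_add_mul_mul_le {z₁ z₂ : 𝕜} (h₁ : ‖z₁‖ ≤ 1) (h₂ : ‖z₂‖ ≤ 1) :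
    ‖(z₁ + z₂) - conj (z₁ + z₂) * (z₁ * z₂)‖ ≤
      ‖z₁‖ * (1 - ‖z₂‖ ^ 2) + ‖z₂‖ * (1 - ‖z₁‖ ^ 2) := by
  have h₁' : 0 ≤ 1 - ‖z₁‖ ^ 2 := by nlinarith [norm_nonneg z₁]
  have h₂' : 0 ≤ 1 - ‖z₂‖ ^ 2 := by nlinarith [norm_nonneg z₂]
  calc ‖(z₁ + z₂) - conj (z₁ + z₂) * (z₁ * z₂)‖
      ≤ ‖z₁ * ((1 - ‖z₂‖ ^ 2 : ℝ) : 𝕜)‖ + ‖z₂ * ((1 - ‖z₁‖ ^ 2 : ℝ) : 𝕜)‖ := by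
        rw [RCLike.add_sub_conj_add_mul_mul_eq]
        exact norm_add_le _ _
    _ = ‖z₁‖ * (1 - ‖z₂‖ ^ 2) + ‖z₂‖ * (1 - ‖z₁‖ ^ 2) := by
        rw [norm_mul, norm_mul, RCLike.norm_of_nonneg h₁', RCLike.norm_of_nonneg h₂']

end RCLike

/-- Agler–Young conditions for the closed symmetrized bidisc. -/
theorem stmt3 (z₁ z₂ : ℂ) (h₁ : ‖z₁‖ ≤ 1) (h₂ : ‖z₂‖ ≤ 1) :
    ‖z₁ + z₂‖ ≤ 2 ∧
    ‖(z₁ + z₂) - (starRingEnd ℂ) (z₁ + z₂) * (z₁ * z₂)‖ ≤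
      1 - ‖z₁ * z₂‖ ^ 2 := by
  refine ⟨(norm_add_le z₁ z₂).trans (by linarith), ?_⟩
  calc ‖(z₁ + z₂) - (starRingEnd ℂ) (z₁ + z₂) * (z₁ * z₂)‖
      ≤ ‖z₁‖ * (1 - ‖z₂‖ ^ 2) + ‖z₂‖ * (1 - ‖z₁‖ ^ 2) :=
        RCLike.norm_add_sub_conj_add_mul_mul_le h₁ h₂
    _ ≤ 1 - ‖z₁ * z₂‖ ^ 2 := by
        rw [norm_mul]
        exact mul_one_sub_sq_add_mul_one_sub_sq_le (norm_nonneg z₁) h₁ h₂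
end

section
/- Let s₁, s₂, p, c₁, c₂ be complex numbers with |p| ≤ 1, |c₁| + |c₂| ≤ 3, s₁ = c₁ + conj(c₂)·p and s₂ = c₂ + conj(c₁)·p. Then for every ω on the unit circle, setting s_ω = (s₁ + ω s₂)/3 and p_ω = ω p, one has |s_ω − conj(s_ω)·p_ω| ≤ 1 − |p_ω|². -/
/-! Writing `s = s₁ + ω s₂`, the map `z ↦ z - conj z · (ω p)` turns `s` into `(c₁ + ω c₂)(1 - |p|²)`:
the terms involving `conj cᵢ · p` cancel because `conj ω · ω = 1` and `conj p · p = |p|²`.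
The bound then follows from `|c₁ + ω c₂| ≤ |c₁| + |c₂| ≤ 3` and `|ω p| = |p|`. -/

open ComplexConjugate

section RCLike

variable {𝕜 : Type*} [RCLike 𝕜]

lemma add_mul_sub_conj_mul_eq (c₁ c₂ p ω : 𝕜) (hω : ‖ω‖ = 1) :
    let s := c₁ + conj c₂ * p + ω * (c₂ + conj c₁ * p)
    s - conj s * (ω * p) = ((1 - ‖p‖ ^ 2 : ℝ) : 𝕜) * (c₁ + ω * c₂) := by
  have hω' : conj ω * ω = 1 := by rw [RCLike.conj_mul, hω]; norm_num
  simp only [map_add, map_mul, RCLike.conj_conj]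
  push_cast
  linear_combination (-(ω * c₂ + c₁)) * RCLike.conj_mul p +
    (-(conj c₂ + c₁ * conj p) * p) * hω'

lemma norm_div_three_sub_conj_mul (z q : 𝕜) :
    ‖z / 3 - conj (z / 3) * q‖ = ‖z - conj z * q‖ / 3 := by
  rw [map_div₀, map_ofNat, div_mul_eq_mul_div, ← sub_div, norm_div, RCLike.norm_ofNat]

lemma norm_add_mul_le_of_norm_eq_one (a b ω : 𝕜) (hω : ‖ω‖ = 1) :
    ‖a + ω * b‖ ≤ ‖a‖ + ‖b‖ := by
  simpa [norm_mul, hω] using norm_add_le a (ω * b)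

end RCLike

/-- The key inequality showing `(s₁,s₂,p) ↦ (s₁/3 + ωs₂/3, ωp)` maps `Γ₃` into `Γ₂`. -/
theorem stmt5 (s₁ s₂ p c₁ c₂ ω : ℂ)
    (hp : ‖p‖ ≤ 1) (hc : ‖c₁‖ + ‖c₂‖ ≤ 3)
    (hs₁ : s₁ = c₁ + (starRingEnd ℂ) c₂ * p) (hs₂ : s₂ = c₂ + (starRingEnd ℂ) c₁ * p)
    (hω : ‖ω‖ = 1) :
    ‖(s₁ + ω * s₂) / 3 - (starRingEnd ℂ) ((s₁ + ω * s₂) / 3) * (ω * p)‖ ≤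
      1 - ‖ω * p‖ ^ 2 := by
  subst hs₁ hs₂
  have h_one_sub_sq : 0 ≤ 1 - ‖p‖ ^ 2 := by nlinarith [norm_nonneg p]
  rw [norm_div_three_sub_conj_mul, add_mul_sub_conj_mul_eq c₁ c₂ p ω hω, norm_mul,
    RCLike.norm_ofReal, abs_of_nonneg h_one_sub_sq, norm_mul, hω, one_mul]
  have hsum : ‖c₁ + ω * c₂‖ ≤ 3 := (norm_add_mul_le_of_norm_eq_one c₁ c₂ ω hω).trans hc
  nlinarith
end

section
/- The point (s₁, s₂, p) = (2, 5/2, 1/2) does not belong to the closed symmetrized tridisc Γ₃, yet for every unimodular ω the point (s₁/3 + ω s₂/3, ω p) satisfies the Agler–Young conditions |s| ≤ 2 and |s − conj(s)·p| ≤ 1 − |p|² for membership in Γ₂. -/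
/-!
If `z₁, z₂, z₃` lie in the closed unit disc, then `2 (Re z)² ≤ 1 + Re z²` for each of them, and
Cauchy–Schwarz on the real parts gives `2 (Re s₁)² ≤ 3 (3 + Re (s₁² - 2 s₂))`; at `(s₁, s₂) = (2, 5/2)`
this reads `8 ≤ 6`. On the other side, for unimodular `ω` the expression `s - conj s · p` collapses
to `1/4 + ω/2`, whose norm is at most `3/4 = 1 - |ω/2|²`.
-/

open Finset ComplexConjugate

lemma Complex.two_mul_re_sq_le_one_add_re_sq {z : ℂ} (hz : ‖z‖ ≤ 1) :
    2 * z.re ^ 2 ≤ 1 + (z ^ 2).re := by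
  have hnormSq : z.re * z.re + z.im * z.im ≤ 1 := by
    rw [← Complex.normSq_apply, Complex.normSq_eq_norm_sq]
    nlinarith [norm_nonneg z]
  rw [pow_two z, Complex.mul_re]
  nlinarith

lemma Complex.two_mul_sq_re_sum_le {ι : Type*} (s : Finset ι) (z : ι → ℂ)
    (hz : ∀ i ∈ s, ‖z i‖ ≤ 1) :
    2 * (∑ i ∈ s, z i).re ^ 2 ≤ #s * (#s + (∑ i ∈ s, z i ^ 2).re) := by
  have hterm : ∑ i ∈ s, 2 * (z i).re ^ 2 ≤ ∑ i ∈ s, (1 + (z i ^ 2).re) :=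
    sum_le_sum fun i hi => two_mul_re_sq_le_one_add_re_sq (hz i hi)
  rw [← mul_sum, sum_add_distrib, sum_const, nsmul_one] at hterm
  rw [Complex.re_sum, Complex.re_sum]
  nlinarith [sq_sum_le_card_mul_sum_sq (s := s) (f := fun i => (z i).re),
    (#s).cast_nonneg (α := ℝ)]

lemma Complex.two_mul_sq_re_esymm_le {z₁ z₂ z₃ : ℂ} (h₁ : ‖z₁‖ ≤ 1) (h₂ : ‖z₂‖ ≤ 1)
    (h₃ : ‖z₃‖ ≤ 1) :
    2 * (z₁ + z₂ + z₃).re ^ 2 ≤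
      3 * (3 + ((z₁ + z₂ + z₃) ^ 2 - 2 * (z₁ * z₂ + z₂ * z₃ + z₃ * z₁)).re) := by
  have h := two_mul_sq_re_sum_le univ ![z₁, z₂, z₃] (by simp [Fin.forall_fin_succ, *])
  have hsq : (z₁ + z₂ + z₃) ^ 2 - 2 * (z₁ * z₂ + z₂ * z₃ + z₃ * z₁) =
      z₁ ^ 2 + z₂ ^ 2 + z₃ ^ 2 := by ring
  rw [hsq]
  simpa [Fin.sum_univ_three] using h

lemma Complex.add_mul_sub_conj_mul_mul {ω : ℂ} (hω : ‖ω‖ = 1) (a b c : ℂ) :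
    (a + ω * b) - conj (a + ω * b) * (ω * c) = (a - conj b * c) + ω * (b - conj a * c) := by
  have hconj : conj ω * ω = 1 := by
    rw [← inv_eq_conj hω, inv_mul_cancel₀ (norm_ne_zero_iff.mp (hω ▸ one_ne_zero))]
  simp only [map_add, map_mul]
  linear_combination (-(conj b * c)) * hconj

/-- `(2, 5/2, 1/2) ∉ Γ₃`, yet `(2/3 + ω(5/2)/3, ω/2)` satisfies the Agler–Young
conditions for `Γ₂` for every unimodular `ω`. -/
theorem stmt7 :
    (¬ ∃ z₁ z₂ z₃ : ℂ, ‖z₁‖ ≤ 1 ∧ ‖z₂‖ ≤ 1 ∧ ‖z₃‖ ≤ 1 ∧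
        (2 : ℂ) = z₁ + z₂ + z₃ ∧ (5 / 2 : ℂ) = z₁ * z₂ + z₂ * z₃ + z₃ * z₁ ∧
        (1 / 2 : ℂ) = z₁ * z₂ * z₃) ∧
    ∀ ω : ℂ, ‖ω‖ = 1 →
      ‖(2 : ℂ) / 3 + ω * (5 / 2) / 3‖ ≤ 2 ∧
      ‖(((2 : ℂ) / 3 + ω * (5 / 2) / 3) -
          (starRingEnd ℂ) ((2 : ℂ) / 3 + ω * (5 / 2) / 3) * (ω * (1 / 2)))‖ ≤
        1 - ‖ω * (1 / 2)‖ ^ 2 := by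
  refine ⟨?_, fun ω hω => ⟨?_, ?_⟩⟩
  · rintro ⟨z₁, z₂, z₃, h₁, h₂, h₃, hs, hq, -⟩
    have h := Complex.two_mul_sq_re_esymm_le h₁ h₂ h₃
    rw [← hs, ← hq] at h
    norm_num at h
  · calc ‖(2 : ℂ) / 3 + ω * (5 / 2) / 3‖ ≤ ‖(2 : ℂ) / 3‖ + ‖ω * (5 / 2) / 3‖ := norm_add_le _ _
      _ ≤ 2 := by norm_num [hω]
  · have hs : (2 : ℂ) / 3 + ω * (5 / 2) / 3 = 2 / 3 + ω * (5 / 6) := by ring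
    rw [hs, Complex.add_mul_sub_conj_mul_mul hω]
    calc ‖(2 / 3 - conj (5 / 6) * (1 / 2) : ℂ) + ω * (5 / 6 - conj (2 / 3) * (1 / 2))‖
        = ‖(1 / 4 : ℂ) + ω * (1 / 2)‖ := by
          congr 1
          simp only [map_div₀, map_ofNat]
          ring
      _ ≤ ‖(1 / 4 : ℂ)‖ + ‖ω * (1 / 2)‖ := norm_add_le _ _
      _ = 1 - ‖ω * (1 / 2)‖ ^ 2 := by norm_num [hω]
end

section
/- Let π₂ : ℂ² → ℂ² be the symmetrization map π₂(z₁, z₂) = (z₁ + z₂, z₁z₂). Then π₂ maps the torus 𝕋² onto the distinguished boundary bΓ₂ = {(s, p) : |p| = 1, s = conj(s)·p, |s| ≤ 2}, i.e., for (z₁, z₂) ∈ 𝕋² the image (s,p) = π₂(z₁,z₂) satisfies |p| = 1, s = conj(s)p and |s| ≤ 2, and conversely every (s,p) with these properties equals π₂(z₁,z₂) for some z₁, z₂ ∈ 𝕋. -/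
/-!
A unit vector `ω` with `ω² = p` rotates the boundary condition `s = conj(s) p` into the statement
that `s / ω` is a real number `r`, with `|r| = |s| ≤ 2`. Writing `r = u + conj u = 2 cos θ` for a
unit `u = exp(iθ)`, the points `z₁ = ω u` and `z₂ = ω conj u` lie on `𝕋` and have sum `s` and
product `ω² |u|² = p`.
-/

open ComplexConjugate

namespace Complex

lemma conj_mul_self_of_norm_eq_one {z : ℂ} (hz : ‖z‖ = 1) : conj z * z = 1 := by
  rw [conj_mul', hz]; norm_num

lemma add_eq_conj_add_mul_mul_of_norm_eq_one {z₁ z₂ : ℂ} (h₁ : ‖z₁‖ = 1) (h₂ : ‖z₂‖ = 1) :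
    z₁ + z₂ = conj (z₁ + z₂) * (z₁ * z₂) :=
  calc z₁ + z₂ = (conj z₁ * z₁) * z₂ + (conj z₂ * z₂) * z₁ := by
        rw [conj_mul_self_of_norm_eq_one h₁, conj_mul_self_of_norm_eq_one h₂]; ring
    _ = conj (z₁ + z₂) * (z₁ * z₂) := by rw [map_add]; ring

lemma exists_sq_eq_of_norm_eq_one {p : ℂ} (hp : ‖p‖ = 1) : ∃ ω : ℂ, ‖ω‖ = 1 ∧ ω ^ 2 = p := by
  obtain ⟨ω, hω⟩ := IsAlgClosed.exists_pow_nat_eq p two_pos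
  refine ⟨ω, ?_, hω⟩
  have : ‖ω‖ ^ 2 = 1 := by rw [← norm_pow, hω, hp]
  nlinarith [norm_nonneg ω]

lemma exists_real_mul_of_eq_conj_mul_sq {s ω : ℂ} (hω : ‖ω‖ = 1) (hs : s = conj s * ω ^ 2) :
    ∃ r : ℝ, s = r * ω := by
  have hreal : conj (s * conj ω) = s * conj ω := by
    calc conj (s * conj ω) = conj s * ω := by rw [map_mul, conj_conj]
      _ = conj s * ω ^ 2 * conj ω := by
        rw [mul_assoc, sq, mul_assoc ω, mul_comm ω (conj ω), conj_mul_self_of_norm_eq_one hω,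
          mul_one]
      _ = s * conj ω := by rw [← hs]
  obtain ⟨r, hr⟩ := conj_eq_iff_real.mp hreal
  refine ⟨r, ?_⟩
  rw [← hr, mul_assoc, conj_mul_self_of_norm_eq_one hω, mul_one]

lemma exists_norm_eq_one_add_conj_eq {r : ℝ} (hr : |r| ≤ 2) :
    ∃ u : ℂ, ‖u‖ = 1 ∧ u + conj u = r := by
  obtain ⟨hr₁, hr₂⟩ := abs_le.mp hr
  refine ⟨exp (Real.arccos (r / 2) * I), norm_exp_ofReal_mul_I _, ?_⟩
  rw [add_conj, exp_ofReal_mul_I_re, Real.cos_arccos (by linarith) (by linarith)]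
  push_cast; ring

end Complex

/-- The symmetrization map `π₂` maps the torus `𝕋²` onto the distinguished boundary
`bΓ₂ = {(s,p) : |p| = 1, s = conj(s)·p, |s| ≤ 2}`. -/
theorem stmt17 :
    (∀ z₁ z₂ : ℂ, ‖z₁‖ = 1 → ‖z₂‖ = 1 →
      ‖z₁ * z₂‖ = 1 ∧ z₁ + z₂ = (starRingEnd ℂ) (z₁ + z₂) * (z₁ * z₂) ∧
        ‖z₁ + z₂‖ ≤ 2) ∧
    ∀ s p : ℂ, ‖p‖ = 1 → s = (starRingEnd ℂ) s * p → ‖s‖ ≤ 2 →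
      ∃ z₁ z₂ : ℂ, ‖z₁‖ = 1 ∧ ‖z₂‖ = 1 ∧ s = z₁ + z₂ ∧ p = z₁ * z₂ := by
  refine ⟨fun z₁ z₂ h₁ h₂ => ⟨?_, Complex.add_eq_conj_add_mul_mul_of_norm_eq_one h₁ h₂, ?_⟩, ?_⟩
  · rw [norm_mul, h₁, h₂, one_mul]
  · linarith [norm_add_le z₁ z₂]
  intro s p hp hsp hs
  obtain ⟨ω, hω, rfl⟩ := Complex.exists_sq_eq_of_norm_eq_one hp
  obtain ⟨r, rfl⟩ := Complex.exists_real_mul_of_eq_conj_mul_sq hω hsp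
  have hr : |r| ≤ 2 := by rwa [norm_mul, hω, mul_one, Complex.norm_real, Real.norm_eq_abs] at hs
  obtain ⟨u, hu, hru⟩ := Complex.exists_norm_eq_one_add_conj_eq hr
  refine ⟨ω * u, ω * conj u, by simp [hω, hu], by simp [hω, hu], ?_, ?_⟩
  · rw [← hru]; ring
  · calc ω ^ 2 = ω ^ 2 * (conj u * u) := by rw [Complex.conj_mul_self_of_norm_eq_one hu, mul_one]
      _ = ω * u * (ω * conj u) := by ring
end
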